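/- arXiv:2003.05130 — 3 statements merged into one kernel-verified Lean document; each statement's English description precedes it below -/
import Mathlib

section
/- Let λ₁,…,λ_n > 0 and P > 0. The allocation p_i = max(0, μ/√λ_i − 1/λ_i), with μ > 0 chosen so that Σ_i p_i = P, minimizes Σ_i 1/(1 + p_i λ_i) over all p with p_i ≥ 0 and Σ_i p_i ≤ P. -/
/-!
The per-channel MSE `x ↦ 1 / (1 + x * l)` is convex, so it lies above its tangent line at `p*ᵢ`,
whose slope is `-l / (1 + p*ᵢ l)²`. By the choice `p*ᵢ = max 0 (μ/√l - 1/l)` this marginal gain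
`l / (1 + p*ᵢ l)²` equals `μ⁻²` on active channels (`1 + p*ᵢ l = μ √l`) and is at most `μ⁻²` on
inactive ones (`μ² l ≤ 1`). Hence each channel loses at most `(pᵢ - p*ᵢ) / μ²` against `p`, and
these losses sum to `(∑ pᵢ - P) / μ² ≤ 0`.
-/

open Finset

lemma one_div_one_add_mul_sub_le {a b l : ℝ} (ha : 0 < 1 + a * l) (hb : 0 < 1 + b * l) :
    1 / (1 + a * l) - 1 / (1 + b * l) ≤ l * (b - a) / (1 + a * l) ^ 2 := by
  have key : l * (b - a) / (1 + a * l) ^ 2 - (1 / (1 + a * l) - 1 / (1 + b * l))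
      = (l * (b - a)) ^ 2 / ((1 + a * l) ^ 2 * (1 + b * l)) := by
    rw [div_sub_div _ _ ha.ne' hb.ne', div_sub_div _ _ (by positivity) (by positivity),
      div_eq_div_iff (by positivity) (by positivity)]
    ring
  have : 0 ≤ (l * (b - a)) ^ 2 / ((1 + a * l) ^ 2 * (1 + b * l)) := by positivity
  linarith

lemma sq_mul_le_one_of_div_sqrt_le {l μ : ℝ} (hl : 0 < l) (hμ : 0 < μ)
    (h : μ / √l - 1 / l ≤ 0) : μ ^ 2 * l ≤ 1 := by
  have hs : 0 < √l := Real.sqrt_pos.mpr hl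
  have hμs : μ * √l ≤ 1 :=
    calc μ * √l = μ / √l * l := by field_simp; rw [Real.sq_sqrt hl.le]
      _ ≤ 1 / l * l := mul_le_mul_of_nonneg_right (by linarith) hl.le
      _ = 1 := by field_simp
  calc μ ^ 2 * l = (μ * √l) ^ 2 := by rw [mul_pow, Real.sq_sqrt hl.le]
    _ ≤ 1 := by nlinarith [mul_pos hμ hs]

lemma one_add_mul_eq_mul_sqrt {l μ : ℝ} (hl : 0 < l) :
    1 + (μ / √l - 1 / l) * l = μ * √l := by
  have hs : 0 < √l := Real.sqrt_pos.mpr hl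
  field_simp
  rw [Real.sq_sqrt hl.le]
  ring

lemma waterfill_sub_le {l μ a b : ℝ} (hl : 0 < l) (hμ : 0 < μ)
    (ha : a = max 0 (μ / √l - 1 / l)) (hb : 0 ≤ b) :
    1 / (1 + a * l) - 1 / (1 + b * l) ≤ (b - a) / μ ^ 2 := by
  have hb' : 0 < 1 + b * l := by positivity
  rcases le_or_gt (μ / √l - 1 / l) 0 with h | h
  · rw [ha, max_eq_left h]
    calc 1 / (1 + 0 * l) - 1 / (1 + b * l) ≤ l * (b - 0) / (1 + 0 * l) ^ 2 :=
          one_div_one_add_mul_sub_le (by simp) hb'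
      _ = b * l := by ring
      _ ≤ (b - 0) / μ ^ 2 := by
          rw [le_div_iff₀ (by positivity)]
          nlinarith [sq_mul_le_one_of_div_sqrt_le hl hμ h]
  · rw [ha, max_eq_right h.le]
    have hsq : (1 + (μ / √l - 1 / l) * l) ^ 2 = μ ^ 2 * l := by
      rw [one_add_mul_eq_mul_sqrt hl, mul_pow, Real.sq_sqrt hl.le]
    calc _ ≤ l * (b - (μ / √l - 1 / l)) / (1 + (μ / √l - 1 / l) * l) ^ 2 :=
          one_div_one_add_mul_sub_le (by rw [one_add_mul_eq_mul_sqrt hl]; positivity) hb'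
      _ = (b - (μ / √l - 1 / l)) / μ ^ 2 := by
          rw [hsq]; field_simp

theorem stmt_8_general {n : ℕ} (lam : Fin n → ℝ) (hlam : ∀ i, 0 < lam i)
    (P μ : ℝ) (hμ : 0 < μ)
    (pstar : Fin n → ℝ) (hps : ∀ i, pstar i = max 0 (μ / Real.sqrt (lam i) - 1 / lam i))
    (hsum : ∑ i, pstar i = P) :
    ∀ p : Fin n → ℝ, (∀ i, 0 ≤ p i) → (∑ i, p i) ≤ P →
      ∑ i, 1 / (1 + pstar i * lam i) ≤ ∑ i, 1 / (1 + p i * lam i) := by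
  intro p hp hpP
  have hchannel := fun i (_ : i ∈ univ) ↦ waterfill_sub_le (hlam i) hμ (hps i) (hp i)
  have htotal : ∑ i, (p i - pstar i) / μ ^ 2 ≤ 0 := by
    rw [← sum_div, sum_sub_distrib, hsum]
    exact div_nonpos_of_nonpos_of_nonneg (by linarith) (by positivity)
  have hgap := (sum_le_sum hchannel).trans htotal
  rw [sum_sub_distrib] at hgap
  linarith

theorem stmt_8 {n : ℕ} (lam : Fin n → ℝ) (hlam : ∀ i, 0 < lam i)
    (P μ : ℝ) (hP : 0 < P) (hμ : 0 < μ)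
    (pstar : Fin n → ℝ) (hps : ∀ i, pstar i = max 0 (μ / Real.sqrt (lam i) - 1 / lam i))
    (hsum : ∑ i, pstar i = P) :
    ∀ p : Fin n → ℝ, (∀ i, 0 ≤ p i) → (∑ i, p i) ≤ P →
      ∑ i, 1 / (1 + pstar i * lam i) ≤ ∑ i, 1 / (1 + p i * lam i) :=
  stmt_8_general lam hlam P μ hμ pstar hps hsum
end

section
/- For a fixed positive diagonal Λ = diag(λ₁,…,λ_n) with entries in descending order, unitary U ∈ ℂ^{n×n}, H_s = U Λ U†, and power budget P > 0, the maximum of log det(I + F† H_s F) over all F ∈ ℂ^{n×n} with tr(F F†) ≤ P is attained by F = U Σ with Σ diagonal, i.e., the optimal input covariance F F† commutes with H_s (is diagonalized by U). -/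
/-!
Write `G = Uᴴ F` and `Λ = diag λ`. By Sylvester's identity
`det (1 + Fᴴ Hs F) = det (1 + Λ^{1/2} G Gᴴ Λ^{1/2})`, and Hadamard's inequality
bounds this by `∏ (1 + λᵢ ‖Gᵢ‖²)`: the value at the diagonal precoder `U diag ‖Gᵢ‖`,
which has the same power `∑ ‖Gᵢ‖² = tr (F Fᴴ)`. So it suffices to maximise
`∏ (1 + λᵢ xᵢ²)` over the compact ball `∑ xᵢ² ≤ P`. Hadamard's inequality itself
follows by scaling the diagonal to `1` and applying `t ≤ exp (t - 1)` to the
eigenvalues, whose sum is then the dimension.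
-/

open Matrix ComplexOrder

namespace Matrix

variable {𝕜 ι : Type*} [RCLike 𝕜] [Fintype ι] [DecidableEq ι]

theorem PosSemidef.det_le_one_of_diag_eq_one {K : Matrix ι ι 𝕜} (hK : K.PosSemidef)
    (hdiag : ∀ i, K i i = 1) : K.det ≤ 1 := by
  set μ := hK.isHermitian.eigenvalues
  have hsum : ∑ i, μ i = Fintype.card ι := by
    have h := hK.isHermitian.trace_eq_sum_eigenvalues
    simp only [trace, diag, hdiag, Finset.sum_const, Finset.card_univ, nsmul_eq_mul, mul_one] at h
    exact_mod_cast h.symm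
  have hprod : ∏ i, μ i ≤ 1 := calc
    ∏ i, μ i ≤ ∏ i, Real.exp (μ i - 1) :=
      Finset.prod_le_prod (fun i _ => hK.eigenvalues_nonneg i)
        (fun i _ => by linarith [Real.add_one_le_exp (μ i - 1)])
    _ = 1 := by simp [← Real.exp_sum, hsum]
  rw [hK.isHermitian.det_eq_prod_eigenvalues, ← RCLike.ofReal_prod, ← RCLike.ofReal_one]
  exact RCLike.ofReal_le_ofReal.mpr hprod

theorem PosDef.det_le_prod_diag {M : Matrix ι ι 𝕜} (hM : M.PosDef) :
    M.det ≤ ∏ i, M i i := by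
  have hpos : ∀ i, 0 < RCLike.re (M i i) := fun i => (RCLike.pos_iff.mp hM.diag_pos).1
  set r : ι → ℝ := fun i => (Real.sqrt (RCLike.re (M i i)))⁻¹
  have hr : ∀ i, (r i : 𝕜) * M i i * r i = 1 := by
    intro i
    rw [← RCLike.conj_eq_iff_re.mp (hM.isHermitian.apply i i)]
    norm_cast
    rw [mul_right_comm, ← sq, inv_pow, Real.sq_sqrt (hpos i).le, inv_mul_cancel₀ (hpos i).ne']
  set S : Matrix ι ι 𝕜 := diagonal fun i => (r i : 𝕜)
  have hS : Sᴴ = S := by simp [S, diagonal_conjTranspose]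
  have hK : (S * M * S).PosSemidef := by
    simpa only [hS] using hM.posSemidef.conjTranspose_mul_mul_same S
  have hdiag : ∀ i, (S * M * S) i i = 1 := by simp [S, diagonal_mul, mul_diagonal, hr]
  have hdet : (S * M * S).det * ∏ i, M i i = M.det := calc
    _ = M.det * ∏ i, ((r i : 𝕜) * M i i * r i) := by
      rw [det_mul, det_mul, det_diagonal, Finset.prod_mul_distrib, Finset.prod_mul_distrib]
      ring
    _ = M.det := by simp [hr]
  calc M.det = (S * M * S).det * ∏ i, M i i := hdet.symm
    _ ≤ 1 * ∏ i, M i i :=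
        mul_le_mul_of_nonneg_right (hK.det_le_one_of_diag_eq_one hdiag)
          (Finset.prod_nonneg fun i _ => hM.diag_pos.le)
    _ = ∏ i, M i i := one_mul _

section Unitary

variable {R n : Type*} [CommRing R] [StarRing R] [Fintype n] [DecidableEq n]
  {U : Matrix n n R}

theorem trace_mul_conjTranspose_of_mem_unitaryGroup (hU : U ∈ unitaryGroup n R)
    {m : Type*} [Fintype m] (A : Matrix n m R) :
    ((U * A) * (U * A)ᴴ).trace = (A * Aᴴ).trace := by
  rw [conjTranspose_mul, Matrix.mul_assoc, trace_mul_comm, Matrix.mul_assoc, Matrix.mul_assoc,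
    ← star_eq_conjTranspose, (mem_unitaryGroup_iff'.mp hU), Matrix.mul_one, trace_mul_comm]

theorem conjTranspose_mul_mul_diagonal_of_mem_unitaryGroup (hU : U ∈ unitaryGroup n R)
    (d t : n → R) :
    (U * diagonal t)ᴴ * (U * diagonal d * Uᴴ) * (U * diagonal t)
      = diagonal fun i => star (t i) * d i * t i := by
  have hUU : Uᴴ * U = 1 := mem_unitaryGroup_iff'.mp hU
  simp only [conjTranspose_mul, diagonal_conjTranspose, Matrix.mul_assoc]
  rw [← Matrix.mul_assoc Uᴴ U, hUU, Matrix.one_mul, ← Matrix.mul_assoc Uᴴ U, hUU,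
    Matrix.one_mul, diagonal_mul_diagonal, diagonal_mul_diagonal]
  simp only [Pi.star_apply, mul_assoc]

end Unitary

section Precoder

variable {𝕜 n m : Type*} [RCLike 𝕜] [Fintype n] [DecidableEq n] [Fintype m] [DecidableEq m]
  {U : Matrix n n 𝕜}

theorem trace_mul_diagonal_mul_conjTranspose_of_mem_unitaryGroup
    (hU : U ∈ unitaryGroup n 𝕜) (x : n → ℝ) :
    ((U * diagonal fun i => (x i : 𝕜)) * (U * diagonal fun i => (x i : 𝕜))ᴴ).trace
      = ((∑ i, x i ^ 2 : ℝ) : 𝕜) := by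
  rw [trace_mul_conjTranspose_of_mem_unitaryGroup hU, diagonal_conjTranspose,
    diagonal_mul_diagonal, trace_diagonal, RCLike.ofReal_sum]
  simp [sq]

theorem exists_diagonal_precoder_det_ge (hU : U ∈ unitaryGroup n 𝕜) {lam : n → ℝ}
    (hlam : ∀ i, 0 ≤ lam i) (F : Matrix n m 𝕜) :
    ∃ x : n → ℝ,
      ((∑ i, x i ^ 2 : ℝ) : 𝕜) = (F * Fᴴ).trace ∧
      (1 + Fᴴ * (U * diagonal (fun i => (lam i : 𝕜)) * Uᴴ) * F).det
        ≤ (1 + (U * diagonal fun i => (x i : 𝕜))ᴴ * (U * diagonal (fun i => (lam i : 𝕜)) * Uᴴ)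
            * (U * diagonal fun i => (x i : 𝕜))).det := by
  set G := Uᴴ * F
  have hGG : (G * Gᴴ).PosSemidef := posSemidef_self_mul_conjTranspose G
  set x : n → ℝ := fun i => Real.sqrt (RCLike.re ((G * Gᴴ) i i))
  have hx : ∀ i, (G * Gᴴ) i i = (x i : 𝕜) ^ 2 := fun i => by
    rw [← RCLike.ofReal_pow, Real.sq_sqrt (RCLike.nonneg_iff.mp (hGG.diag_nonneg)).1,
      hGG.isHermitian.coe_re_apply_self]
  refine ⟨x, ?_, ?_⟩
  · rw [← trace_mul_conjTranspose_of_mem_unitaryGroup (Unitary.star_mem hU) F,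
      star_eq_conjTranspose, RCLike.ofReal_sum]
    exact Finset.sum_congr rfl fun i _ => by rw [RCLike.ofReal_pow, ← hx]; rfl
  · set D : Matrix n n 𝕜 := diagonal fun i => (Real.sqrt (lam i) : 𝕜)
    have hD : Dᴴ = D := by simp [D, diagonal_conjTranspose]
    have hDD : D * D = diagonal fun i => (lam i : 𝕜) := by
      simp only [D, diagonal_mul_diagonal, ← RCLike.ofReal_mul, Real.mul_self_sqrt (hlam _)]
    set N := D * G
    have hFHF : Fᴴ * (U * diagonal (fun i => (lam i : 𝕜)) * Uᴴ) * F = Nᴴ * N := by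
      simp only [← hDD, N, G, conjTranspose_mul, conjTranspose_conjTranspose, hD,
        Matrix.mul_assoc]
    have hNN : ∀ i, (N * Nᴴ) i i = lam i * (x i) ^ 2 := fun i => by
      have : N * Nᴴ = D * (G * Gᴴ) * D := by
        simp only [N, conjTranspose_mul, hD, Matrix.mul_assoc]
      rw [this]
      have hsqrt : (Real.sqrt (lam i) : 𝕜) * Real.sqrt (lam i) = lam i := by
        rw [← RCLike.ofReal_mul, Real.mul_self_sqrt (hlam i)]
      simp only [D, diagonal_mul, mul_diagonal, hx]
      linear_combination (x i : 𝕜) ^ 2 * hsqrt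
    calc (1 + Fᴴ * (U * diagonal (fun i => (lam i : 𝕜)) * Uᴴ) * F).det
        = (1 + N * Nᴴ).det := by rw [hFHF, det_one_add_mul_comm]
      _ ≤ ∏ i, (1 + N * Nᴴ : Matrix n n 𝕜) i i :=
        (PosDef.one.add_posSemidef (posSemidef_self_mul_conjTranspose N)).det_le_prod_diag
      _ = ∏ i, (1 + star (x i : 𝕜) * lam i * x i) := Finset.prod_congr rfl fun i _ => by
        rw [add_apply, one_apply_eq, hNN, RCLike.star_def, RCLike.conj_ofReal]
        ring
      _ = _ := by
        rw [conjTranspose_mul_mul_diagonal_of_mem_unitaryGroup hU, ← diagonal_one, diagonal_add,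
          det_diagonal]

end Precoder

end Matrix

theorem isCompact_setOf_sum_sq_le {ι : Type*} [Fintype ι] (P : ℝ) :
    IsCompact {x : ι → ℝ | ∑ i, x i ^ 2 ≤ P} := by
  refine (isCompact_univ_pi fun _ => isCompact_Icc (a := -Real.sqrt P) (b := Real.sqrt P))
    |>.of_isClosed_subset (isClosed_le (by fun_prop) continuous_const) fun x hx i _ => ?_
  exact abs_le.mp <| Real.abs_le_sqrt <|
    (Finset.single_le_sum (fun j _ => sq_nonneg (x j)) (Finset.mem_univ i)).trans hx

theorem stmt_9_general {n : ℕ} (lam : Fin n → ℝ) (hlam : ∀ i, 0 < lam i)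
    (U : Matrix (Fin n) (Fin n) ℂ) (hU : U ∈ Matrix.unitaryGroup (Fin n) ℂ)
    (Hs : Matrix (Fin n) (Fin n) ℂ)
    (hHs : Hs = U * Matrix.diagonal (fun i => (lam i : ℂ)) * Uᴴ)
    (P : ℝ) (hP : 0 < P) :
    ∃ s : Fin n → ℝ,
      ((U * Matrix.diagonal (fun i => (s i : ℂ))) *
          (U * Matrix.diagonal (fun i => (s i : ℂ)))ᴴ).trace.re ≤ P ∧
      ∀ F : Matrix (Fin n) (Fin n) ℂ, (F * Fᴴ).trace.re ≤ P →
        Real.log ((1 + Fᴴ * Hs * F).det.re) ≤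
          Real.log ((1 + (U * Matrix.diagonal (fun i => (s i : ℂ)))ᴴ * Hs *
            (U * Matrix.diagonal (fun i => (s i : ℂ)))).det.re) := by
  have hHs_psd : Hs.PosSemidef := hHs ▸ (posSemidef_diagonal_iff.mpr fun i => by
    exact_mod_cast (hlam i).le).mul_mul_conjTranspose_same U
  obtain ⟨s, hs, hs_max⟩ := (isCompact_setOf_sum_sq_le P).exists_isMaxOn
    ⟨0, by simpa using hP.le⟩ (f := fun x : Fin n → ℝ =>
      (1 + (U * diagonal fun i => (x i : ℂ))ᴴ * Hs * (U * diagonal fun i => (x i : ℂ))).det.re)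
    (by fun_prop)
  refine ⟨s, ?_, fun F hF => ?_⟩
  · exact (congrArg Complex.re
      (trace_mul_diagonal_mul_conjTranspose_of_mem_unitaryGroup hU s)).trans_le hs
  obtain ⟨x, hx, hFx⟩ := exists_diagonal_precoder_det_ge hU (fun i => (hlam i).le) F
  have hpos := (PosDef.one.add_posSemidef (hHs_psd.conjTranspose_mul_mul_same F)).det_pos
  subst hHs
  refine Real.log_le_log (Complex.pos_iff.mp hpos).1 ((Complex.le_def.mp hFx).1.trans (hs_max ?_))
  exact (RCLike.ofReal_re (K := ℂ) _).symm.trans (congrArg RCLike.re hx) |>.trans_le hF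

theorem stmt_9 {n : ℕ} (lam : Fin n → ℝ) (hlam : ∀ i, 0 < lam i)
    (hdesc : ∀ i j : Fin n, i ≤ j → lam j ≤ lam i)
    (U : Matrix (Fin n) (Fin n) ℂ) (hU : U ∈ Matrix.unitaryGroup (Fin n) ℂ)
    (Hs : Matrix (Fin n) (Fin n) ℂ)
    (hHs : Hs = U * Matrix.diagonal (fun i => (lam i : ℂ)) * Uᴴ)
    (P : ℝ) (hP : 0 < P) :
    ∃ s : Fin n → ℝ,
      ((U * Matrix.diagonal (fun i => (s i : ℂ))) *
          (U * Matrix.diagonal (fun i => (s i : ℂ)))ᴴ).trace.re ≤ P ∧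
      ∀ F : Matrix (Fin n) (Fin n) ℂ, (F * Fᴴ).trace.re ≤ P →
        Real.log ((1 + Fᴴ * Hs * F).det.re) ≤
          Real.log ((1 + (U * Matrix.diagonal (fun i => (s i : ℂ)))ᴴ * Hs *
            (U * Matrix.diagonal (fun i => (s i : ℂ)))).det.re) :=
  stmt_9_general lam hlam U hU Hs hHs P hP
end

section
/- The solution of the scalar relay water-filling: for θ, λ > 0, c > 0, and Lagrange multiplier μ > 0, the maximizer over ξ ≥ 0 of log((θ²ξλ + θ²ξ + 1)/(θ²ξ + 1)) − μ⁻¹ c ξ ... equivalently, the KKT stationary point of max Σᵢ log((θᵢ²ξᵢλᵢ + θᵢ²ξᵢ + 1)/(θᵢ²ξᵢ + 1)) subject to Σᵢ cᵢ ξᵢ ≤ P, ξᵢ ≥ 0 with cᵢ = λᵢ + 1 + ακ, is given by ξᵢ = (1/(2θᵢ²(λᵢ+1))) · max(0, √(λᵢ² + 4λᵢθᵢ²(λᵢ+1)μ/cᵢ) − λᵢ − 2). -/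
/-!
With `a = θ²`, the rate is `log (a (λ+1) x + 1) - log (a x + 1)`, whose derivative is
`a λ / ((a (λ+1) x + 1)(a x + 1))`. The water-filling level `ξ` is the positive root of the
quadratic `(a (λ+1) ξ + 1)(a ξ + 1) = a λ μ / c`, so the derivative at `ξ` is `c / μ`.
-/

theorem hasDerivAt_log_div_affine (u v x : ℝ) (hu : u * x + 1 ≠ 0) (hv : v * x + 1 ≠ 0) :
    HasDerivAt (fun x => Real.log ((u * x + 1) / (v * x + 1)))
      ((u - v) / ((u * x + 1) * (v * x + 1))) x := by
  have hu' : HasDerivAt (fun x => u * x + 1) u x := by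
    simpa using ((hasDerivAt_id x).const_mul u).add_const 1
  have hv' : HasDerivAt (fun x => v * x + 1) v x := by
    simpa using ((hasDerivAt_id x).const_mul v).add_const 1
  have hq : HasDerivAt (fun x => (u * x + 1) / (v * x + 1))
      ((u * (v * x + 1) - (u * x + 1) * v) / (v * x + 1) ^ 2) x := hu'.div hv' hv
  refine (hq.log (div_ne_zero hu hv)).congr_deriv ?_
  field_simp
  ring

theorem waterFilling_product_eq (a lam s ξ : ℝ) (ha : a ≠ 0) (hlam : lam + 1 ≠ 0)
    (hξ : ξ = (s - lam - 2) / (2 * a * (lam + 1))) :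
    (a * (lam + 1) * ξ + 1) * (a * ξ + 1) = (s ^ 2 - lam ^ 2) / (4 * (lam + 1)) := by
  subst hξ
  field_simp
  ring

theorem stmt_14_general (θ lam μ : ℝ)
    (c : ℝ)
    (ξ : ℝ)
    (hξdef : ξ = 1 / (2 * θ ^ 2 * (lam + 1)) *
      max 0 (Real.sqrt (lam ^ 2 + 4 * lam * θ ^ 2 * (lam + 1) * μ / c) - lam - 2))
    (hξpos : 0 < ξ) :
    HasDerivAt
      (fun x : ℝ => Real.log ((θ ^ 2 * x * lam + θ ^ 2 * x + 1) / (θ ^ 2 * x + 1)))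
      (c / μ) ξ := by
  set a := θ ^ 2
  set D := lam ^ 2 + 4 * lam * a * (lam + 1) * μ / c
  set s := Real.sqrt D
  have hprod := hξdef ▸ hξpos
  have hk : 0 < 1 / (2 * a * (lam + 1)) := pos_of_mul_pos_left hprod (le_max_left _ _)
  have hgap : 0 < s - lam - 2 :=
    (lt_max_iff.mp (pos_of_mul_pos_right hprod hk.le)).resolve_left (lt_irrefl 0)
  have hu : 0 < a * (lam + 1) := by
    rw [one_div_pos, mul_assoc] at hk
    exact pos_of_mul_pos_right hk zero_le_two
  have hlam : 0 < lam + 1 := pos_of_mul_pos_right hu (sq_nonneg θ)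
  have hξ : ξ = (s - lam - 2) / (2 * a * (lam + 1)) := by
    rw [hξdef, max_eq_right hgap.le, one_div_mul_eq_div]
  have hN : 0 < a * (lam + 1) * ξ + 1 := add_pos (mul_pos hu hξpos) one_pos
  have hM : 0 < a * ξ + 1 := add_pos_of_nonneg_of_pos (mul_nonneg (sq_nonneg θ) hξpos.le) one_pos
  have hs : s ^ 2 = D := Real.sq_sqrt (Real.sqrt_pos.mp (by linarith)).le
  have hNM : (a * (lam + 1) * ξ + 1) * (a * ξ + 1) = a * lam * (μ / c) := by
    rw [waterFilling_product_eq a lam s ξ (left_ne_zero_of_mul hu.ne') hlam.ne' hξ, hs]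
    field_simp
    ring
  have hlam0 : a * lam ≠ 0 := left_ne_zero_of_mul (hNM ▸ (mul_pos hN hM).ne')
  convert hasDerivAt_log_div_affine (a * (lam + 1)) a ξ hN.ne' hM.ne' using 1
  · funext x
    ring_nf
  · rw [hNM, show a * (lam + 1) - a = a * lam by ring, div_mul_cancel_left₀ hlam0, inv_div]

theorem stmt_14 (θ lam α κ μ : ℝ) (hθ : 0 < θ) (hlam : 0 < lam)
    (hα : 0 ≤ α) (hκ : 0 ≤ κ) (hμ : 0 < μ)
    (c : ℝ) (hc : c = lam + 1 + α * κ)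
    (ξ : ℝ)
    (hξdef : ξ = 1 / (2 * θ ^ 2 * (lam + 1)) *
      max 0 (Real.sqrt (lam ^ 2 + 4 * lam * θ ^ 2 * (lam + 1) * μ / c) - lam - 2))
    (hξpos : 0 < ξ) :
    HasDerivAt
      (fun x : ℝ => Real.log ((θ ^ 2 * x * lam + θ ^ 2 * x + 1) / (θ ^ 2 * x + 1)))
      (c / μ) ξ :=
  stmt_14_general θ lam μ c ξ hξdef hξpos
end
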